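/- Assume L ⊆ Σ^ω is recognized by some deterministic co-Büchi automaton. For every pointed pair (u,v) with v ≠ ε, and for all x,y ∈ Σ*: (u,vx) ≡_L (u,vy) if and only if (u,vx) ≈_L (u,vy). -/

import Mathlib

open Classical

/-- Rank of a transition in a co-Büchi automaton: `one` or `two`. -/
inductive Rk | one | two
deriving DecidableEq

/-- A co-Büchi automaton over alphabet `A` with state type `Q`:
initial states and a transition relation where each transition carries a rank. -/
structure CoBuchi (A : Type) (Q : Type) where
  init : Set Q
  delta : Set (Q × A × Rk × Q)

namespace CoBuchi

variable {A Q : Type}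

/-- Every state has an outgoing transition on every letter. -/
def Total (M : CoBuchi A Q) : Prop :=
  ∀ q a, ∃ r q', (q, a, r, q') ∈ M.delta

/-- The prefix `α[0..n-1]` of an infinite word. -/
def prefW (α : ℕ → A) (n : ℕ) : List A := (List.range n).map α

/-- The infinite word `a·w`. -/
def consW (a : A) (w : ℕ → A) : ℕ → A := fun n => match n with
  | 0 => a
  | Nat.succ k => w k

/-- `L(M,q)`: infinite words having a run from `q` with only finitely many rank-1
transitions. -/
def LangFrom (M : CoBuchi A Q) (q : Q) : Set (ℕ → A) :=
  { w | ∃ (ρ : ℕ → Q) (r : ℕ → Rk), ρ 0 = q ∧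
        (∀ n, (ρ n, w n, r n, ρ (n + 1)) ∈ M.delta) ∧
        ∃ N, ∀ n, N ≤ n → r n = Rk.two }

/-- `L(M)`: the language of the automaton. -/
def Lang (M : CoBuchi A Q) : Set (ℕ → A) :=
  { w | ∃ q ∈ M.init, w ∈ M.LangFrom q }

/-- `q →₂^w q'`: a finite run from `q` to `q'` on `w` using only rank-2 transitions. -/
def SafeReach (M : CoBuchi A Q) : Q → List A → Q → Prop
  | q, [], q' => q = q'
  | q, a :: w, q' => ∃ p, (q, a, Rk.two, p) ∈ M.delta ∧ SafeReach M p w q'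

/-- A finite run from `q` to `q'` on `w` using transitions of any rank. -/
def Reach (M : CoBuchi A Q) : Q → List A → Q → Prop
  | q, [], q' => q = q'
  | q, a :: w, q' => ∃ r p, (q, a, r, p) ∈ M.delta ∧ Reach M p w q'

/-- Safe language of a state. -/
def Lsf (M : CoBuchi A Q) (q : Q) : Set (List A) := { w | ∃ q', M.SafeReach q w q' }

/-- Semantically-deterministic: every transition respects residuals. -/
def SemDet (M : CoBuchi A Q) : Prop :=
  ∀ p a rk q, (p, a, rk, q) ∈ M.delta →
    M.LangFrom q = { w | consW a w ∈ M.LangFrom p }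

/-- Unsafe-saturated: all residual-respecting rank-1 transitions are present. -/
def UnsafeSat (M : CoBuchi A Q) : Prop :=
  ∀ p a q, M.LangFrom q = { w | consW a w ∈ M.LangFrom p } →
    (p, a, Rk.one, q) ∈ M.delta

/-- Safe-deterministic: at most one rank-2 transition per state and letter. -/
def SafeDet (M : CoBuchi A Q) : Prop :=
  ∀ p a q q', (p, a, Rk.two, q) ∈ M.delta → (p, a, Rk.two, q') ∈ M.delta → q = q'

/-- Normalized: every rank-2 transition can be completed to a rank-2 loop. -/
def Normalized (M : CoBuchi A Q) : Prop :=
  ∀ q a q', (q, a, Rk.two, q') ∈ M.delta → ∃ x, M.SafeReach q' x q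

/-- Deterministic: one initial state, exactly one transition per state and letter. -/
def Deterministic (M : CoBuchi A Q) : Prop :=
  (∃! q, q ∈ M.init) ∧ ∀ p a, ∃! t : Rk × Q, (p, a, t.1, t.2) ∈ M.delta

/-- History-deterministic: a strategy `σ : Σ* → Q` resolving the nondeterminism,
whose run on every `α ∈ L(M)` can be ranked with finitely many rank-1 transitions. -/
def HistoryDet (M : CoBuchi A Q) : Prop :=
  ∃ σ : List A → Q, σ [] ∈ M.init ∧
    (∀ w a, ∃ rk, (σ w, a, rk, σ (w ++ [a])) ∈ M.delta) ∧
    ∀ α ∈ M.Lang, ∃ r : ℕ → Rk,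
      (∀ n, (σ (prefW α n), α n, r n, σ (prefW α (n + 1))) ∈ M.delta) ∧
      ∃ N, ∀ n, N ≤ n → r n = Rk.two

/-- `q` and `q'` are in the same safe SCC (mutually reachable via rank-2 runs). -/
def SameSafeSCC (M : CoBuchi A Q) (q q' : Q) : Prop :=
  (∃ x, M.SafeReach q x q') ∧ (∃ y, M.SafeReach q' y q)

end CoBuchi

section LangDefs

variable {A : Type} [Nonempty A]

/-- The infinite word `u·w`. -/
def appW (u : List A) (w : ℕ → A) : ℕ → A :=
  fun n => if h : n < u.length then u.get ⟨n, h⟩ else w (n - u.length)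

/-- The infinite word `v^ω` (arbitrary if `v = ε`). -/
noncomputable def iterW (v : List A) : ℕ → A :=
  fun n =>
    if h : v = [] then Classical.arbitrary A
    else v.get ⟨n % v.length, Nat.mod_lt _ (List.length_pos_iff.mpr h)⟩

/-- The ultimately periodic word `u v^ω`. -/
noncomputable def upW (u v : List A) : ℕ → A := appW u (iterW v)

/-- The right congruence `u ∼_L v`. -/
def SimL (L : Set (ℕ → A)) (u v : List A) : Prop :=
  ∀ w : ℕ → A, appW u w ∈ L ↔ appW v w ∈ L

/-- `(u,v) ≈_L ⊥`: `v ≠ ε` and `u(vx)^ω ∉ L` for all `x` with `uvx ∼_L u`. -/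
def ApproxBot (L : Set (ℕ → A)) (u v : List A) : Prop :=
  v ≠ [] ∧ ∀ x : List A, SimL L (u ++ v ++ x) u → upW u (v ++ x) ∉ L

/-- The safe language of a pair: `sfl(u,v) = {x | (u,vx) not ≈_L ⊥}`. -/
def Sfl (L : Set (ℕ → A)) (u v : List A) : Set (List A) :=
  { x | ¬ ApproxBot L u (v ++ x) }

/-- `(u,v) ≡_L (u',v')`. -/
def EquivL (L : Set (ℕ → A)) (u v u' v' : List A) : Prop :=
  SimL L (u ++ v) (u' ++ v') ∧ Sfl L u v = Sfl L u' v'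

/-- `(u,v)` is pointed. -/
def IsPointed (L : Set (ℕ → A)) (u v : List A) : Prop :=
  ¬ ApproxBot L u v ∧
    ∀ u₁ u₂ : List A, SimL L (u₁ ++ u₂) u → ¬ ApproxBot L u₁ (u₂ ++ v) →
      Sfl L u v = Sfl L u₁ (u₂ ++ v)

/-- `(u,v) ≈_L (u',v')` (for pairs with nonempty second components). -/
def ApproxL (L : Set (ℕ → A)) (u v u' v' : List A) : Prop :=
  SimL L u u' ∧ SimL L (u ++ v) (u' ++ v') ∧
    ∀ x : List A, SimL L (u ++ v ++ x) u →
      (upW u (v ++ x) ∈ L ↔ upW u' (v' ++ x) ∈ L)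

/-- `L` is recognized by some (total) deterministic co-Büchi automaton. -/
def DCWRecognizable (L : Set (ℕ → A)) : Prop :=
  ∃ (Q : Type) (_ : Fintype Q) (M : CoBuchi A Q), M.Deterministic ∧ M.Lang = L

/-- IsPointed pairs. -/
def PointedPair (L : Set (ℕ → A)) : Type :=
  { p : List A × List A // IsPointed L p.1 p.2 }

/-- `≡_L` as a setoid on all pairs. -/
def equivLSetoid (L : Set (ℕ → A)) : Setoid (List A × List A) where
  r p q := EquivL L p.1 p.2 q.1 q.2
  iseqv := {
    refl := fun p => ⟨fun w => Iff.rfl, rfl⟩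
    symm := fun h => ⟨fun w => (h.1 w).symm, h.2.symm⟩
    trans := fun h g => ⟨fun w => (h.1 w).trans (g.1 w), h.2.trans g.2⟩ }

/-- `≡_L` as a setoid on pointed pairs. -/
def canonSetoid (L : Set (ℕ → A)) : Setoid (PointedPair L) where
  r p q := EquivL L p.1.1 p.1.2 q.1.1 q.1.2
  iseqv := {
    refl := fun p => ⟨fun w => Iff.rfl, rfl⟩
    symm := fun h => ⟨fun w => (h.1 w).symm, h.2.symm⟩
    trans := fun h g => ⟨fun w => (h.1 w).trans (g.1 w), h.2.trans g.2⟩ }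

/-- States of the canonical automaton: `≡_L`-classes of pointed pairs. -/
def CanonState (L : Set (ℕ → A)) : Type := Quotient (canonSetoid L)

/-- The class `⟦u,v⟧` of a pointed pair. -/
def cls (L : Set (ℕ → A)) (u v : List A) (h : IsPointed L u v) : CanonState L :=
  Quotient.mk (canonSetoid L) ⟨(u, v), h⟩

/-- The canonical automaton `A_{≡_L}`. -/
def canonAut (L : Set (ℕ → A)) : CoBuchi A (CanonState L) where
  init := { s | ∃ (u v : List A) (h : IsPointed L u v),
              s = cls L u v h ∧ SimL L (u ++ v) [] }
  delta := { t |
    (∃ (u v : List A) (h : IsPointed L u v) (h' : IsPointed L u (v ++ [t.2.1])),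
        ¬ ApproxBot L u (v ++ [t.2.1]) ∧
        t.1 = cls L u v h ∧ t.2.2.1 = Rk.two ∧
        t.2.2.2 = cls L u (v ++ [t.2.1]) h') ∨
    (∃ (u v u' v' : List A) (h : IsPointed L u v) (h' : IsPointed L u' v'),
        SimL L (u ++ v ++ [t.2.1]) (u' ++ v') ∧
        t.1 = cls L u v h ∧ t.2.2.1 = Rk.one ∧ t.2.2.2 = cls L u' v' h') }

/-- `θ(u,v)`: states of `A_{≡_L}` reachable by reading `u` from an initial state
(any ranks) and then `v` via rank-2 transitions only. -/
def theta (L : Set (ℕ → A)) (u v : List A) : Set (CanonState L) :=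
  { q | ∃ p₀ ∈ (canonAut L).init, ∃ p,
          (canonAut L).Reach p₀ u p ∧ (canonAut L).SafeReach p v q }

/-- `(u,v)` is supported: `θ(u,v) ≠ ∅`. -/
def Supported (L : Set (ℕ → A)) (u v : List A) : Prop := (theta L u v).Nonempty

/-- `(u,v)` is double-supported: two distinct states of `θ(u,v)` in the same safe SCC. -/
def DoubleSupported (L : Set (ℕ → A)) (u v : List A) : Prop :=
  ∃ q ∈ theta L u v, ∃ q' ∈ theta L u v, q ≠ q' ∧ (canonAut L).SameSafeSCC q q'

/-- `(u,v)` is single-supported. -/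
def SingleSupported (L : Set (ℕ → A)) (u v : List A) : Prop :=
  Supported L u v ∧ ¬ DoubleSupported L u v

/-- `w` concatenated with itself `m` times. -/
def repCat (w : List A) : ℕ → List A
  | 0 => []
  | Nat.succ m => w ++ repCat w m

end LangDefs

/-!
The implication from `≈_L` to `≡_L` is immediate: the periodicity clause turns a safe witness
for `(u, vxs)` into one for `(u, vys)`. Conversely, let `uvxz ∼_L u` and `u(vxz)^ω ∈ L`. Equal
safe languages transfer the safety of `(u, vxz)` and of `(u, vxzv)` to `(u, vyz)` and
`(u, vyzv)`; since `(u, v)` is pointed, `sfl(u, v) = sfl(u, (vyz)^m v)` for every `m`, so every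
power `(u, (vyz)^m)` is safe. In a deterministic co-Büchi automaton with `n` states, the run on a
safe witness `u((vyz)^(n+1) χ)^ω` eventually reads a whole block `(vyz)^(n+1)` with rank-2
transitions only; by pigeonhole it closes a safe cycle on a power of `vyz` after a prefix
`t ∼_L u`, hence `u(vyz)^ω ∈ L`.
-/
section Words

variable {A : Type}

lemma appW_of_lt (u : List A) (w : ℕ → A) {n : ℕ} (h : n < u.length) : appW u w n = u[n] := by
  simp [appW, h]

lemma appW_length_add (u : List A) (w : ℕ → A) (p : ℕ) : appW u w (u.length + p) = w p := by
  simp [appW]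

lemma appW_append (u v : List A) (w : ℕ → A) : appW (u ++ v) w = appW u (appW v w) := by
  funext n
  simp only [appW, List.length_append, List.get_eq_getElem, List.getElem_append]
  split_ifs <;> first | rfl | omega | (congr 1; omega)

lemma repCat_length (w : List A) (k : ℕ) : (repCat w k).length = k * w.length := by
  induction k with
  | zero => simp [repCat]
  | succ k ih => simp [repCat, ih, Nat.succ_mul, Nat.add_comm]

lemma repCat_add (w : List A) (a b : ℕ) : repCat w (a + b) = repCat w a ++ repCat w b := by
  induction a with
  | zero => simp [repCat]
  | succ a ih => simp [Nat.succ_add, repCat, ih]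

lemma repCat_succ (w : List A) (k : ℕ) : repCat w (k + 1) = repCat w k ++ w := by
  rw [repCat_add]
  simp [repCat]

lemma repCat_succ_ne_nil {w : List A} (hw : w ≠ []) (k : ℕ) : repCat w (k + 1) ≠ [] := by
  simp [repCat, hw]

variable [Nonempty A]

lemma iterW_of_lt (w : List A) {n : ℕ} (h : n < w.length) : iterW w n = w[n] := by
  have hw : w ≠ [] := List.ne_nil_of_length_pos (by omega)
  simp [iterW, hw, Nat.mod_eq_of_lt h]

lemma iterW_periodic (w : List A) : Function.Periodic (iterW w) w.length := by
  intro n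
  by_cases hw : w = [] <;> simp [iterW, hw]

lemma appW_iterW_self (w : List A) : appW w (iterW w) = iterW w := by
  funext n
  by_cases h : n < w.length
  · rw [appW_of_lt w _ h, iterW_of_lt w h]
  · simp only [appW, dif_neg h]
    simpa [Nat.sub_add_cancel (not_lt.1 h)] using (iterW_periodic w (n - w.length)).symm

lemma appW_repCat_iterW (w : List A) (k : ℕ) : appW (repCat w k) (iterW w) = iterW w := by
  induction k with
  | zero => funext n; simp [appW, repCat]
  | succ k ih => rw [repCat, appW_append, ih, appW_iterW_self]

lemma eq_iterW_of_appW_eq {w : List A} (hw : w ≠ []) {ω : ℕ → A} (h : appW w ω = ω) :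
    ω = iterW w := by
  funext n
  induction n using Nat.strong_induction_on with
  | _ n ih =>
    rw [← h, ← appW_iterW_self w]
    by_cases hn : n < w.length
    · rw [appW_of_lt w _ hn, appW_of_lt w _ hn]
    · have hpos : 0 < w.length := List.length_pos_iff.mpr hw
      simp only [appW, dif_neg hn]
      exact ih _ (by omega)

lemma upW_append_self (u w : List A) : upW u (w ++ w) = upW u w := by
  by_cases hw : w = []
  · simp [hw]
  · have : appW (w ++ w) (iterW w) = iterW w := by
      rw [appW_append, appW_iterW_self, appW_iterW_self]
    rw [upW, upW, ← eq_iterW_of_appW_eq (by simp [hw]) this]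

end Words

section RightCongruence

variable {A : Type} {L : Set (ℕ → A)}

lemma simL_refl (L : Set (ℕ → A)) (u : List A) : SimL L u u := fun _ => Iff.rfl

lemma SimL.symm {u v : List A} (h : SimL L u v) : SimL L v u := fun w => (h w).symm

lemma SimL.trans {u v w : List A} (h₁ : SimL L u v) (h₂ : SimL L v w) : SimL L u w :=
  fun α => (h₁ α).trans (h₂ α)

lemma SimL.append_right {s t : List A} (h : SimL L s t) (r : List A) :
    SimL L (s ++ r) (t ++ r) := by
  intro w
  rw [appW_append, appW_append]
  exact h _

lemma simL_append_repCat {u g : List A} (h : SimL L (u ++ g) u) (k : ℕ) :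
    SimL L (u ++ repCat g k) u := by
  induction k with
  | zero => simpa [repCat] using simL_refl L u
  | succ k ih =>
    have h' := h.append_right (repCat g k)
    rw [List.append_assoc] at h'
    exact h'.trans ih

end RightCongruence

section SafeLanguage

variable {A : Type} [Nonempty A] {L : Set (ℕ → A)}

lemma not_approxBot_iff {u c : List A} (hc : c ≠ []) :
    ¬ ApproxBot L u c ↔ ∃ x, SimL L (u ++ c ++ x) u ∧ upW u (c ++ x) ∈ L := by
  simp [ApproxBot, hc]

lemma not_approxBot_of_witness {u c : List A} (x : List A) (hsim : SimL L (u ++ c ++ x) u)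
    (hmem : upW u (c ++ x) ∈ L) : ¬ ApproxBot L u c :=
  fun h => h.2 x hsim hmem

lemma mem_sfl_append {u c d s : List A} : s ∈ Sfl L u (c ++ d) ↔ d ++ s ∈ Sfl L u c := by
  simp [Sfl, List.append_assoc]

end SafeLanguage

namespace CoBuchi.Deterministic

variable {A Q : Type} {M : CoBuchi A Q} (hdet : M.Deterministic)

noncomputable def q₀ : Q := hdet.1.exists.choose

noncomputable def step (q : Q) (a : A) : Rk × Q := (hdet.2 q a).exists.choose

lemma q₀_mem : hdet.q₀ ∈ M.init := hdet.1.exists.choose_spec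

lemma eq_q₀_of_mem_init {q : Q} (h : q ∈ M.init) : q = hdet.q₀ :=
  hdet.1.unique h hdet.q₀_mem

lemma step_mem (q : Q) (a : A) : (q, a, (hdet.step q a).1, (hdet.step q a).2) ∈ M.delta :=
  (hdet.2 q a).exists.choose_spec

lemma step_eq_of_mem {q q' : Q} {a : A} {r : Rk} (h : (q, a, r, q') ∈ M.delta) :
    hdet.step q a = (r, q') :=
  (hdet.2 q a).unique (hdet.step_mem q a) h

noncomputable def run (w : ℕ → A) : ℕ → Q
  | 0 => hdet.q₀
  | n + 1 => (hdet.step (run w n) (w n)).2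

noncomputable def rank (w : ℕ → A) (n : ℕ) : Rk := (hdet.step (hdet.run w n) (w n)).1

lemma mem_lang_iff {w : ℕ → A} : w ∈ M.Lang ↔ ∃ N, ∀ n, N ≤ n → hdet.rank w n = .two := by
  constructor
  · rintro ⟨q, hq, ρ, r, rfl, hρ, N, hN⟩
    have hrun : ∀ n, ρ n = hdet.run w n := by
      intro n
      induction n with
      | zero => exact hdet.eq_q₀_of_mem_init hq
      | succ n ih =>
        have := hdet.step_eq_of_mem (hρ n)
        rw [ih] at this
        simp [run, this]
    refine ⟨N, fun n hn => ?_⟩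
    have := hdet.step_eq_of_mem (hρ n)
    rw [hrun] at this
    simp [rank, this, hN n hn]
  · rintro ⟨N, hN⟩
    exact ⟨_, hdet.q₀_mem, hdet.run w, hdet.rank w, rfl, fun _ => hdet.step_mem _ _, N, hN⟩

variable {hdet}

lemma run_add_congr {V W : ℕ → A} {m m' : ℕ} (hrun : hdet.run V m = hdet.run W m') {j : ℕ}
    (hVW : ∀ i < j, V (m + i) = W (m' + i)) : hdet.run V (m + j) = hdet.run W (m' + j) := by
  induction j with
  | zero => exact hrun
  | succ j ih =>
    change (hdet.step (hdet.run V (m + j)) (V (m + j))).2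
      = (hdet.step (hdet.run W (m' + j)) (W (m' + j))).2
    rw [ih fun i hi => hVW i (by omega), hVW j (by omega)]

lemma rank_add_congr {V W : ℕ → A} {m m' : ℕ} (hrun : hdet.run V m = hdet.run W m') {j : ℕ}
    (hVW : ∀ i ≤ j, V (m + i) = W (m' + i)) : hdet.rank V (m + j) = hdet.rank W (m' + j) := by
  simp only [rank, run_add_congr hrun fun i hi => hVW i hi.le, hVW j le_rfl]

variable (hdet)

lemma appW_mem_lang_of_safe_cycle [Nonempty A] {t : List A} {ω' ω : ℕ → A} {D : ℕ}
    (hD : 0 < D) (hω : Function.Periodic ω D) (hagree : ∀ p < D, ω' p = ω p)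
    (hcycle : hdet.run (appW t ω') (t.length + D) = hdet.run (appW t ω') t.length)
    (hsafe : ∀ p < D, hdet.rank (appW t ω') (t.length + p) = .two) :
    appW t ω ∈ M.Lang := by
  have hprefix : hdet.run (appW t ω) (0 + t.length) = hdet.run (appW t ω') (0 + t.length) :=
    run_add_congr (V := appW t ω) (W := appW t ω') rfl fun i hi => by simp [appW_of_lt t _ hi]
  rw [zero_add] at hprefix
  have hblock : ∀ k, ∀ i < D, appW t ω (t.length + k * D + i) = appW t ω' (t.length + i) := by
    intro k i hi
    rw [add_assoc, appW_length_add, appW_length_add, hagree i hi, add_comm]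
    simpa using hω.nat_mul k i
  have hloop : ∀ k, hdet.run (appW t ω) (t.length + k * D) = hdet.run (appW t ω') t.length := by
    intro k
    induction k with
    | zero => simpa using hprefix
    | succ k ih =>
      rw [Nat.succ_mul, ← add_assoc, run_add_congr ih (hblock k), hcycle]
  refine hdet.mem_lang_iff.2 ⟨t.length, fun n hn => ?_⟩
  obtain ⟨k, p, hp, rfl⟩ : ∃ k p, p < D ∧ n = t.length + k * D + p :=
    ⟨(n - t.length) / D, (n - t.length) % D, Nat.mod_lt _ hD, by
      have := Nat.div_add_mod' (n - t.length) D; omega⟩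
  rw [rank_add_congr (hloop k) fun i hi => hblock k i (by omega)]
  exact hsafe p hp

lemma exists_appW_repCat_mem_lang [Nonempty A] [Fintype Q] {e : List A} (he : e ≠ [])
    (t : List A) (ω : ℕ → A)
    (hsafe : ∀ n, t.length ≤ n →
      hdet.rank (appW t (appW (repCat e (Fintype.card Q + 1)) ω)) n = .two) :
    ∃ a, appW (t ++ repCat e a) (iterW e) ∈ M.Lang := by
  set K := Fintype.card Q + 1
  set W := appW t (appW (repCat e K) ω)
  obtain ⟨i, j, hij, heq⟩ := Fintype.exists_ne_map_eq_of_card_lt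
    (fun i : Fin K => hdet.run W (t.length + i * e.length)) (by simp [K])
  wlog hlt : i < j generalizing i j
  · exact this j i hij.symm heq.symm (lt_of_le_of_ne (not_lt.1 hlt) hij.symm)
  have hj : (j : ℕ) < K := j.is_lt
  have hsplit : W = appW (t ++ repCat e i) (appW (repCat e (K - i)) ω) := by
    rw [appW_append, ← appW_append (repCat e i), ← repCat_add, Nat.add_sub_cancel' i.is_lt.le]
  have hlen : (t ++ repCat e i).length = t.length + i * e.length := by simp [repCat_length]
  have hDle : (j - i) * e.length ≤ (K - i) * e.length := Nat.mul_le_mul_right _ (by omega)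
  refine ⟨i, hdet.appW_mem_lang_of_safe_cycle (ω' := appW (repCat e (K - i)) ω)
    (D := (j - i) * e.length)
    (Nat.mul_pos (by omega) (List.length_pos_iff.mpr he)) ((iterW_periodic e).nat_mul _)
    (fun p hp => ?_) ?_ fun p _ => ?_⟩
  · have hp' : p < (repCat e (K - i)).length := by rw [repCat_length]; omega
    rw [← appW_repCat_iterW e (K - i), appW_of_lt _ _ hp', appW_of_lt _ _ hp']
  · rw [← hsplit, hlen, add_assoc, ← add_mul, Nat.add_sub_cancel' hlt.le]
    exact heq.symm
  · rw [← hsplit]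
    exact hsafe _ (by omega)

end CoBuchi.Deterministic

section Pointed

variable {A : Type} [Nonempty A] {L : Set (ℕ → A)}

lemma upW_mem_of_forall_not_approxBot_repCat (hrec : DCWRecognizable L) {u e : List A}
    (he : e ≠ []) (hres : SimL L (u ++ e) u)
    (hsafe : ∀ m, ¬ ApproxBot L u (repCat e (m + 1))) : upW u e ∈ L := by
  obtain ⟨Q, _, M, hdet, rfl⟩ := hrec
  set c := repCat e (Fintype.card Q + 1)
  obtain ⟨χ, hχsim, hχmem⟩ := (not_approxBot_iff (repCat_succ_ne_nil he _)).1 (hsafe _)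
  obtain ⟨N, hN⟩ := hdet.mem_lang_iff.1 hχmem
  set γ := c ++ χ
  have hγ : 0 < γ.length := by simp [γ, c, repCat, List.length_pos_iff.mpr he]
  have hunfold : upW u γ = appW (u ++ repCat γ N) (appW c (appW χ (iterW γ))) := by
    rw [← appW_append c, appW_iterW_self, appW_append, appW_repCat_iterW, upW]
  obtain ⟨a, ha⟩ := hdet.exists_appW_repCat_mem_lang he (u ++ repCat γ N) (appW χ (iterW γ))
    fun n hn => by
      rw [← hunfold]
      refine hN n (le_trans ?_ hn)
      simp only [List.length_append, repCat_length]
      nlinarith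
  have hsim : SimL M.Lang (u ++ repCat γ N ++ repCat e a) u :=
    ((simL_append_repCat (by rwa [← List.append_assoc]) N).append_right _).trans
      (simL_append_repCat hres a)
  exact (hsim (iterW e)).1 ha

lemma IsPointed.not_approxBot_repCat_append {u v w : List A} (hpt : IsPointed L u v)
    (hres : SimL L (u ++ (v ++ w)) u) (hwv : w ++ v ∈ Sfl L u v) (m : ℕ) :
    ¬ ApproxBot L u (repCat (v ++ w) m ++ v) := by
  induction m with
  | zero => simpa [repCat] using hpt.1
  | succ m ih =>
    have hsfl := hpt.2 u _ (simL_append_repCat hres m) ih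
    have : w ++ v ∈ Sfl L u (repCat (v ++ w) m ++ v) := hsfl ▸ hwv
    simpa [Sfl, repCat_succ] using this

lemma IsPointed.not_approxBot_repCat {u v w : List A} (hpt : IsPointed L u v)
    (hres : SimL L (u ++ (v ++ w)) u) (hw : w ∈ Sfl L u v) (hwv : w ++ v ∈ Sfl L u v) (m : ℕ) :
    ¬ ApproxBot L u (repCat (v ++ w) (m + 1)) := by
  have hsfl :=
    hpt.2 u _ (simL_append_repCat hres m) (hpt.not_approxBot_repCat_append hres hwv m)
  have : w ∈ Sfl L u (repCat (v ++ w) m ++ v) := hsfl ▸ hw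
  simpa [Sfl, repCat_succ] using this

lemma IsPointed.upW_mem_of_equivL (hrec : DCWRecognizable L) {u v x y z : List A}
    (hpt : IsPointed L u v) (hv : v ≠ []) (hxy : EquivL L u (v ++ x) u (v ++ y))
    (hz : SimL L (u ++ (v ++ x) ++ z) u) (hmem : upW u (v ++ x ++ z) ∈ L) :
    upW u (v ++ y ++ z) ∈ L := by
  have hres : SimL L (u ++ (v ++ (y ++ z))) u := by
    simpa using (hxy.1.symm.append_right z).trans hz
  have hw : y ++ z ∈ Sfl L u v := by
    rw [← mem_sfl_append, ← hxy.2]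
    exact not_approxBot_of_witness [] (by simpa using hz) (by simpa using hmem)
  have hwv : y ++ z ++ v ∈ Sfl L u v := by
    rw [List.append_assoc, ← mem_sfl_append, ← hxy.2]
    have hsquare : v ++ x ++ (z ++ v) ++ (x ++ z) = v ++ x ++ z ++ (v ++ x ++ z) := by simp
    refine not_approxBot_of_witness (x ++ z) ?_ ?_
    · have hz' : SimL L (u ++ (v ++ x ++ z)) u := by simpa using hz
      rw [List.append_assoc u, hsquare]
      simpa using (hz'.append_right (v ++ x ++ z)).trans hz'
    · rwa [hsquare, upW_append_self]
  simpa using upW_mem_of_forall_not_approxBot_repCat hrec (by simp [hv]) hres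
    (hpt.not_approxBot_repCat hres hw hwv)

lemma sfl_subset_of_upW_mem {u c c' : List A} (hc : c ≠ []) (hcc' : SimL L (u ++ c) (u ++ c'))
    (hper : ∀ z, SimL L (u ++ c ++ z) u → upW u (c ++ z) ∈ L → upW u (c' ++ z) ∈ L) :
    Sfl L u c ⊆ Sfl L u c' := by
  intro s hs
  obtain ⟨w, hsim, hmem⟩ := (not_approxBot_iff (by simp [hc])).1 hs
  rw [List.append_assoc] at hsim hmem
  refine not_approxBot_of_witness w ?_ ?_
  · simpa using (hcc'.symm.append_right (s ++ w)).trans (by simpa using hsim)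
  · simpa using hper _ (by simpa using hsim) hmem

end Pointed

theorem stmt14_general {A : Type} [Nonempty A] (L : Set (ℕ → A))
    (hrec : DCWRecognizable L)
    (u v : List A) (h : IsPointed L u v) (hv : v ≠ []) (x y : List A) :
    EquivL L u (v ++ x) u (v ++ y) ↔ ApproxL L u (v ++ x) u (v ++ y) := by
  constructor
  · intro hxy
    have hyx : EquivL L u (v ++ y) u (v ++ x) := ⟨hxy.1.symm, hxy.2.symm⟩
    refine ⟨simL_refl L u, hxy.1, fun z hz => ⟨h.upW_mem_of_equivL hrec hv hxy hz, ?_⟩⟩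
    exact h.upW_mem_of_equivL hrec hv hyx ((hxy.1.symm.append_right z).trans hz)
  · rintro ⟨-, hxy, hper⟩
    have hvx : v ++ x ≠ [] := by simp [hv]
    have hvy : v ++ y ≠ [] := by simp [hv]
    refine ⟨hxy, (sfl_subset_of_upW_mem hvx hxy fun z hz => (hper z hz).1).antisymm
      (sfl_subset_of_upW_mem hvy hxy.symm fun z hz => (hper z ?_).2)⟩
    exact (hxy.append_right z).trans hz

/-- for pointed `(u,v)` with `v ≠ ε`:
`(u,vx) ≡_L (u,vy)` iff `(u,vx) ≈_L (u,vy)`. -/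
theorem stmt14 {A : Type} [Nonempty A] [Fintype A] (L : Set (ℕ → A))
    (hrec : DCWRecognizable L)
    (u v : List A) (h : IsPointed L u v) (hv : v ≠ []) (x y : List A) :
    EquivL L u (v ++ x) u (v ++ y) ↔ ApproxL L u (v ++ x) u (v ++ y) :=
  stmt14_general L hrec u v h hv x y
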